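/- Let B ∈ ℝ^{m×n} be a NAE3SAT clause matrix, and let A ∈ ℝ^{(m+3n)×3n} be the block matrix whose blocks, from top to bottom, are [⅓B ⅓B ⅓B], [I_n I_n −I_n], [I_n −I_n I_n], and [−I_n I_n I_n]. If there exists ψ ∈ {0,1}ⁿ that NAE-satisfies B, then lindisc(A) ≤ 4/3; that is, for every w ∈ [0,1]^{3n} there exists x ∈ {0,1}^{3n} with ‖A(w − x)‖_∞ ≤ 4/3. -/

import Mathlib

/-!
For each variable `i` of `B`, the three coordinates `w i, w (n+i), w (2n+i)` are rounded jointly.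
Sorting them, rounding none, the largest, or the two largest to `1` leaves residues `d` with
`|d_a + d_b - d_c| ≤ 4/3` (the identity blocks) and residue sum `s_i ∈ [0, 2]`; complementing
everything gives the same with `s_i ∈ [-2, 0]`, and we pick the version where `s_i` has the sign
of `1 - 2ψ_i`. A clause row of `A(w - x)` is `(b₁ s_{i₁} + b₂ s_{i₂} + b₃ s_{i₃}) / 3`. Since `ψ`
NAE-satisfies the clause, the signs `b_k (1 - 2ψ_{i_k})` are not all equal, so the summands of
opposite signs cannot add up beyond `2 + 2 = 4`.
-/

/-- The block matrix `A` with row blocks `[⅓B ⅓B ⅓B]`, `[I I -I]`, `[I -I I]`, `[-I I I]`. -/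
noncomputable def Amat {m n : ℕ} (B : Matrix (Fin m) (Fin n) ℝ) :
    Matrix (Fin m ⊕ (Fin n ⊕ Fin n ⊕ Fin n)) (Fin n ⊕ Fin n ⊕ Fin n) ℝ :=
  Matrix.of fun r c =>
    match r with
    | Sum.inl j => (1 / 3) * B j (Sum.elim id (Sum.elim id id) c)
    | Sum.inr (Sum.inl k) =>
        Sum.elim (fun i => if k = i then (1 : ℝ) else 0)
          (Sum.elim (fun i => if k = i then (1 : ℝ) else 0)
            (fun i => if k = i then (-1 : ℝ) else 0)) c
    | Sum.inr (Sum.inr (Sum.inl k)) =>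
        Sum.elim (fun i => if k = i then (1 : ℝ) else 0)
          (Sum.elim (fun i => if k = i then (-1 : ℝ) else 0)
            (fun i => if k = i then (1 : ℝ) else 0)) c
    | Sum.inr (Sum.inr (Sum.inr k)) =>
        Sum.elim (fun i => if k = i then (-1 : ℝ) else 0)
          (Sum.elim (fun i => if k = i then (1 : ℝ) else 0)
            (fun i => if k = i then (1 : ℝ) else 0)) c

/-- `B` is a NAE3SAT clause matrix: each row is `b₁e^{i₁} + b₂e^{i₂} + b₃e^{i₃}`
with signs `b₁,b₂,b₃ ∈ {-1,1}`. -/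
def IsNAEClauseMatrix {m n : ℕ} (B : Matrix (Fin m) (Fin n) ℝ) : Prop :=
  ∃ (i1 i2 i3 : Fin m → Fin n) (b1 b2 b3 : Fin m → ℝ),
    (∀ j, (b1 j = -1 ∨ b1 j = 1) ∧ (b2 j = -1 ∨ b2 j = 1) ∧ (b3 j = -1 ∨ b3 j = 1)) ∧
    (∀ j i, B j i = (if i1 j = i then b1 j else 0) + (if i2 j = i then b2 j else 0) +
      (if i3 j = i then b3 j else 0))

/-- `ψ ∈ {0,1}ⁿ` NAE-satisfies `B` if `‖B((1/2)·1 - ψ)‖_∞ ≤ 1/2`. -/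
def NAESatisfies {m n : ℕ} (B : Matrix (Fin m) (Fin n) ℝ) (ψ : Fin n → ℝ) : Prop :=
  (∀ i, ψ i = 0 ∨ ψ i = 1) ∧ ‖B.mulVec ((fun _ => (1 : ℝ) / 2) - ψ)‖ ≤ 1 / 2

open Matrix

section Rounding

def PairBalanced (a b c : ℝ) : Prop :=
  |a + b - c| ≤ 4 / 3 ∧ |a - b + c| ≤ 4 / 3 ∧ |-a + b + c| ≤ 4 / 3

def HasBalancedRounding (σ u v z : ℝ) : Prop :=
  ∃ p q r : ℝ, (p = 0 ∨ p = 1) ∧ (q = 0 ∨ q = 1) ∧ (r = 0 ∨ r = 1) ∧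
    0 ≤ σ * ((u - p) + (v - q) + (z - r)) ∧ σ * ((u - p) + (v - q) + (z - r)) ≤ 2 ∧
    PairBalanced (u - p) (v - q) (z - r)

variable {σ u v z : ℝ}

theorem PairBalanced.swap₁₂ {a b c : ℝ} (h : PairBalanced a b c) : PairBalanced b a c := by
  obtain ⟨h₁, h₂, h₃⟩ := h
  refine ⟨?_, ?_, ?_⟩
  · rwa [add_comm b]
  · rwa [show b - a + c = -a + b + c by ring]
  · rwa [show -b + a + c = a - b + c by ring]

theorem PairBalanced.swap₂₃ {a b c : ℝ} (h : PairBalanced a b c) : PairBalanced a c b := by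
  obtain ⟨h₁, h₂, h₃⟩ := h
  refine ⟨?_, ?_, ?_⟩
  · rwa [show a + c - b = a - b + c by ring]
  · rwa [show a - c + b = a + b - c by ring]
  · rwa [show -a + c + b = -a + b + c by ring]

theorem PairBalanced.neg {a b c : ℝ} (h : PairBalanced a b c) :
    PairBalanced (-a) (-b) (-c) := by
  obtain ⟨h₁, h₂, h₃⟩ := h
  refine ⟨?_, ?_, ?_⟩
  · rwa [show -a + -b - -c = -(a + b - c) by ring, abs_neg]
  · rwa [show -a - -b + -c = -(a - b + c) by ring, abs_neg]
  · rwa [show - -a + -b + -c = -(-a + b + c) by ring, abs_neg]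

theorem HasBalancedRounding.swap₁₂ (h : HasBalancedRounding σ u v z) :
    HasBalancedRounding σ v u z := by
  obtain ⟨p, q, r, hp, hq, hr, h₀, h₂, hbal⟩ := h
  exact ⟨q, p, r, hq, hp, hr, by linarith, by linarith, hbal.swap₁₂⟩

theorem HasBalancedRounding.swap₂₃ (h : HasBalancedRounding σ u v z) :
    HasBalancedRounding σ u z v := by
  obtain ⟨p, q, r, hp, hq, hr, h₀, h₂, hbal⟩ := h
  exact ⟨p, r, q, hp, hr, hq, by linarith, by linarith, hbal.swap₂₃⟩

theorem HasBalancedRounding.of_one_sub (h : HasBalancedRounding σ (1 - u) (1 - v) (1 - z)) :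
    HasBalancedRounding (-σ) u v z := by
  obtain ⟨p, q, r, hp, hq, hr, h₀, h₂, hbal⟩ := h
  have one_sub_binary : ∀ t : ℝ, t = 0 ∨ t = 1 → 1 - t = 0 ∨ 1 - t = 1 := by
    rintro t (rfl | rfl) <;> norm_num
  refine ⟨1 - p, 1 - q, 1 - r, one_sub_binary p hp, one_sub_binary q hq, one_sub_binary r hr,
    by linarith, by linarith, ?_⟩
  convert hbal.neg using 1 <;> ring

theorem hasBalancedRounding_one_of_le (hz : 0 ≤ z) (hzv : z ≤ v) (hvu : v ≤ u) (hu : u ≤ 1) :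
    HasBalancedRounding 1 u v z := by
  unfold HasBalancedRounding PairBalanced
  simp only [one_mul, abs_le]
  by_cases hsum : u + v + z ≤ 2
  · by_cases htop : u + v - z ≤ 4 / 3
    · refine ⟨0, 0, 0, by norm_num, by norm_num, by norm_num, ?_⟩
      refine ⟨?_, ?_, ⟨?_, ?_⟩, ⟨?_, ?_⟩, ⟨?_, ?_⟩⟩ <;> linarith
    · refine ⟨1, 0, 0, by norm_num, by norm_num, by norm_num, ?_⟩
      refine ⟨?_, ?_, ⟨?_, ?_⟩, ⟨?_, ?_⟩, ⟨?_, ?_⟩⟩ <;> linarith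
  · refine ⟨1, 1, 0, by norm_num, by norm_num, by norm_num, ?_⟩
    refine ⟨?_, ?_, ⟨?_, ?_⟩, ⟨?_, ?_⟩, ⟨?_, ?_⟩⟩ <;> linarith

theorem hasBalancedRounding_one (hu : u ∈ Set.Icc (0 : ℝ) 1) (hv : v ∈ Set.Icc (0 : ℝ) 1)
    (hz : z ∈ Set.Icc (0 : ℝ) 1) : HasBalancedRounding 1 u v z := by
  obtain ⟨hu₀, hu₁⟩ := hu
  obtain ⟨hv₀, hv₁⟩ := hv
  obtain ⟨hz₀, hz₁⟩ := hz
  rcases le_total v u with hvu | huv <;> rcases le_total z v with hzv | hvz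
  · exact hasBalancedRounding_one_of_le hz₀ hzv hvu hu₁
  · rcases le_total z u with hzu | huz
    · exact (hasBalancedRounding_one_of_le hv₀ hvz hzu hu₁).swap₂₃
    · exact (hasBalancedRounding_one_of_le hv₀ hvu huz hz₁).swap₁₂.swap₂₃
  · rcases le_total z u with hzu | huz
    · exact (hasBalancedRounding_one_of_le hz₀ hzu huv hv₁).swap₁₂
    · exact (hasBalancedRounding_one_of_le hu₀ huz hzv hv₁).swap₂₃.swap₁₂
  · exact (hasBalancedRounding_one_of_le hu₀ huv hvz hz₁).swap₁₂.swap₂₃.swap₁₂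

theorem hasBalancedRounding (hσ : σ = 1 ∨ σ = -1) (hu : u ∈ Set.Icc (0 : ℝ) 1)
    (hv : v ∈ Set.Icc (0 : ℝ) 1) (hz : z ∈ Set.Icc (0 : ℝ) 1) :
    HasBalancedRounding σ u v z := by
  have one_sub_mem : ∀ t ∈ Set.Icc (0 : ℝ) 1, 1 - t ∈ Set.Icc (0 : ℝ) 1 := fun t ⟨h₀, h₁⟩ =>
    ⟨by linarith, by linarith⟩
  rcases hσ with rfl | rfl
  · exact hasBalancedRounding_one hu hv hz
  · exact (hasBalancedRounding_one (one_sub_mem u hu) (one_sub_mem v hv)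
      (one_sub_mem z hz)).of_one_sub

end Rounding

section Clause

theorem abs_sign_combination_le_four {c₁ c₂ c₃ t₁ t₂ t₃ : ℝ}
    (hc₁ : c₁ = 1 ∨ c₁ = -1) (hc₂ : c₂ = 1 ∨ c₂ = -1) (hc₃ : c₃ = 1 ∨ c₃ = -1)
    (hnae : |c₁ + c₂ + c₃| ≤ 1)
    (ht₁ : 0 ≤ t₁ ∧ t₁ ≤ 2) (ht₂ : 0 ≤ t₂ ∧ t₂ ≤ 2) (ht₃ : 0 ≤ t₃ ∧ t₃ ≤ 2) :
    |c₁ * t₁ + c₂ * t₂ + c₃ * t₃| ≤ 4 := by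
  rw [abs_le] at hnae ⊢
  rcases hc₁ with rfl | rfl <;> rcases hc₂ with rfl | rfl <;> rcases hc₃ with rfl | rfl <;>
    norm_num at hnae <;> constructor <;> linarith [ht₁.1, ht₁.2, ht₂.1, ht₂.2, ht₃.1, ht₃.2]

theorem abs_clause_le_four {b₁ b₂ b₃ σ₁ σ₂ σ₃ s₁ s₂ s₃ : ℝ}
    (hb₁ : b₁ = -1 ∨ b₁ = 1) (hb₂ : b₂ = -1 ∨ b₂ = 1) (hb₃ : b₃ = -1 ∨ b₃ = 1)
    (hσ₁ : σ₁ = 1 ∨ σ₁ = -1) (hσ₂ : σ₂ = 1 ∨ σ₂ = -1) (hσ₃ : σ₃ = 1 ∨ σ₃ = -1)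
    (hnae : |b₁ * σ₁ + b₂ * σ₂ + b₃ * σ₃| ≤ 1)
    (hs₁ : 0 ≤ σ₁ * s₁ ∧ σ₁ * s₁ ≤ 2) (hs₂ : 0 ≤ σ₂ * s₂ ∧ σ₂ * s₂ ≤ 2)
    (hs₃ : 0 ≤ σ₃ * s₃ ∧ σ₃ * s₃ ≤ 2) :
    |b₁ * s₁ + b₂ * s₂ + b₃ * s₃| ≤ 4 := by
  have sign_mul : ∀ b σ : ℝ, (b = -1 ∨ b = 1) → (σ = 1 ∨ σ = -1) → b * σ = 1 ∨ b * σ = -1 := by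
    rintro b σ (rfl | rfl) (rfl | rfl) <;> norm_num
  have unsign : ∀ b σ s : ℝ, (σ = 1 ∨ σ = -1) → b * s = b * σ * (σ * s) := by
    rintro b σ s (rfl | rfl) <;> ring
  rw [unsign b₁ σ₁ s₁ hσ₁, unsign b₂ σ₂ s₂ hσ₂, unsign b₃ σ₃ s₃ hσ₃]
  exact abs_sign_combination_le_four (sign_mul _ _ hb₁ hσ₁) (sign_mul _ _ hb₂ hσ₂)
    (sign_mul _ _ hb₃ hσ₃) hnae hs₁ hs₂ hs₃

theorem mulVec_apply_of_row_eq {m n : ℕ} {B : Matrix (Fin m) (Fin n) ℝ} {j : Fin m}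
    {i₁ i₂ i₃ : Fin n} {b₁ b₂ b₃ : ℝ}
    (hrow : ∀ i, B j i = (if i₁ = i then b₁ else 0) + (if i₂ = i then b₂ else 0) +
      (if i₃ = i then b₃ else 0)) (y : Fin n → ℝ) :
    (B *ᵥ y) j = b₁ * y i₁ + b₂ * y i₂ + b₃ * y i₃ := by
  simp only [mulVec, dotProduct, hrow, add_mul, ite_mul, zero_mul, Finset.sum_add_distrib,
    Finset.sum_ite_eq, Finset.mem_univ, if_true]

end Clause

section Amat

variable {m n : ℕ}

def blockSum (y : Fin n ⊕ Fin n ⊕ Fin n → ℝ) (i : Fin n) : ℝ :=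
  y (.inl i) + y (.inr (.inl i)) + y (.inr (.inr i))

theorem Amat_mulVec_inl (B : Matrix (Fin m) (Fin n) ℝ) (y : Fin n ⊕ Fin n ⊕ Fin n → ℝ)
    (j : Fin m) : (Amat B *ᵥ y) (.inl j) = 1 / 3 * (B *ᵥ blockSum y) j := by
  simp only [mulVec, dotProduct, Amat, of_apply, Fintype.sum_sum_type, Sum.elim_inl,
    Sum.elim_inr, id_eq, blockSum, mul_add, Finset.sum_add_distrib, Finset.mul_sum, mul_assoc]
  ring

theorem Amat_mulVec_inr_inl (B : Matrix (Fin m) (Fin n) ℝ) (y : Fin n ⊕ Fin n ⊕ Fin n → ℝ)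
    (k : Fin n) :
    (Amat B *ᵥ y) (.inr (.inl k)) = y (.inl k) + y (.inr (.inl k)) - y (.inr (.inr k)) := by
  simp only [mulVec, dotProduct, Amat, of_apply, Fintype.sum_sum_type, Sum.elim_inl,
    Sum.elim_inr, ite_mul, one_mul, zero_mul, neg_mul, Finset.sum_ite_eq, Finset.mem_univ,
    if_true]
  ring

theorem Amat_mulVec_inr_inr_inl (B : Matrix (Fin m) (Fin n) ℝ)
    (y : Fin n ⊕ Fin n ⊕ Fin n → ℝ) (k : Fin n) :
    (Amat B *ᵥ y) (.inr (.inr (.inl k))) = y (.inl k) - y (.inr (.inl k)) + y (.inr (.inr k)) := by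
  simp only [mulVec, dotProduct, Amat, of_apply, Fintype.sum_sum_type, Sum.elim_inl,
    Sum.elim_inr, ite_mul, one_mul, zero_mul, neg_mul, Finset.sum_ite_eq, Finset.mem_univ,
    if_true]
  ring

theorem Amat_mulVec_inr_inr_inr (B : Matrix (Fin m) (Fin n) ℝ)
    (y : Fin n ⊕ Fin n ⊕ Fin n → ℝ) (k : Fin n) :
    (Amat B *ᵥ y) (.inr (.inr (.inr k))) =
      -y (.inl k) + y (.inr (.inl k)) + y (.inr (.inr k)) := by
  simp only [mulVec, dotProduct, Amat, of_apply, Fintype.sum_sum_type, Sum.elim_inl,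
    Sum.elim_inr, ite_mul, one_mul, zero_mul, neg_mul, Finset.sum_ite_eq, Finset.mem_univ,
    if_true]
  ring

end Amat

theorem NAESatisfies.abs_mulVec_sign_le_one {m n : ℕ} {B : Matrix (Fin m) (Fin n) ℝ}
    {ψ : Fin n → ℝ} (h : NAESatisfies B ψ) (j : Fin m) :
    |(B *ᵥ fun i => 1 - 2 * ψ i) j| ≤ 1 := by
  have hsign : (fun i => 1 - 2 * ψ i) = (2 : ℝ) • ((fun _ => (1 : ℝ) / 2) - ψ) := by
    ext i
    simp only [Pi.smul_apply, Pi.sub_apply, smul_eq_mul]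
    ring
  have hrow := (norm_le_pi_norm _ j).trans h.2
  rw [Real.norm_eq_abs] at hrow
  rw [hsign, mulVec_smul, Pi.smul_apply, smul_eq_mul, abs_mul, abs_two]
  linarith

theorem exists_binary_balanced_rounding {n : ℕ} {σ : Fin n → ℝ} (hσ : ∀ i, σ i = 1 ∨ σ i = -1)
    {w : Fin n ⊕ Fin n ⊕ Fin n → ℝ} (hw : ∀ i, w i ∈ Set.Icc (0 : ℝ) 1) :
    ∃ x : Fin n ⊕ Fin n ⊕ Fin n → ℝ, (∀ i, x i = 0 ∨ x i = 1) ∧ ∀ k,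
      (0 ≤ σ k * blockSum (w - x) k ∧ σ k * blockSum (w - x) k ≤ 2) ∧
      PairBalanced ((w - x) (.inl k)) ((w - x) (.inr (.inl k))) ((w - x) (.inr (.inr k))) := by
  choose p q r hp hq hr h₀ h₂ hbal using
    fun k => hasBalancedRounding (hσ k) (hw (.inl k)) (hw (.inr (.inl k))) (hw (.inr (.inr k)))
  refine ⟨Sum.elim p (Sum.elim q r), ?_, fun k => ?_⟩
  · rintro (i | i | i)
    exacts [hp i, hq i, hr i]
  · simp only [blockSum, Pi.sub_apply, Sum.elim_inl, Sum.elim_inr]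
    exact ⟨⟨h₀ k, h₂ k⟩, hbal k⟩

/-- Completeness of the NP-hardness reduction: if `B` has a NAE-satisfying assignment, then
for every `w ∈ [0,1]^{3n}` there is `x ∈ {0,1}^{3n}` with `‖A(w-x)‖_∞ ≤ 4/3`. -/
theorem reduction_completeness {m n : ℕ} (B : Matrix (Fin m) (Fin n) ℝ)
    (hB : IsNAEClauseMatrix B) (hsat : ∃ ψ : Fin n → ℝ, NAESatisfies B ψ) :
    ∀ w : (Fin n ⊕ Fin n ⊕ Fin n) → ℝ, (∀ i, w i ∈ Set.Icc (0 : ℝ) 1) →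
      ∃ x : (Fin n ⊕ Fin n ⊕ Fin n) → ℝ, (∀ i, x i = 0 ∨ x i = 1) ∧
        ‖(Amat B).mulVec (w - x)‖ ≤ 4 / 3 := by
  obtain ⟨i₁, i₂, i₃, b₁, b₂, b₃, hb, hrow⟩ := hB
  obtain ⟨ψ, hψ⟩ := hsat
  intro w hw
  have hσ : ∀ i, 1 - 2 * ψ i = 1 ∨ 1 - 2 * ψ i = -1 := fun i => by
    rcases hψ.1 i with h | h <;> norm_num [h]
  obtain ⟨x, hx, hres⟩ := exists_binary_balanced_rounding hσ hw
  refine ⟨x, hx, (pi_norm_le_iff_of_nonneg (by norm_num)).2 ?_⟩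
  rintro (j | k | k | k) <;> rw [Real.norm_eq_abs]
  · have hclause := hψ.abs_mulVec_sign_le_one j
    rw [mulVec_apply_of_row_eq (hrow j)] at hclause
    have hsum := abs_clause_le_four (hb j).1 (hb j).2.1 (hb j).2.2 (hσ _) (hσ _) (hσ _) hclause
      (hres _).1 (hres _).1 (hres _).1
    rw [Amat_mulVec_inl, mulVec_apply_of_row_eq (hrow j), abs_mul, abs_of_pos (by norm_num)]
    linarith
  · rw [Amat_mulVec_inr_inl]
    exact (hres k).2.1
  · rw [Amat_mulVec_inr_inr_inl]
    exact (hres k).2.2.1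
  · rw [Amat_mulVec_inr_inr_inr]
    exact (hres k).2.2.2
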